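/- arXiv:gr-qc/0509080 — 5 statements merged into one kernel-verified Lean document; each statement's English description precedes it below -/
import Mathlib

section
/- The convolution of two even bump functions is an even bump function: if e, f : ℝ → ℝ are even, nonnegative, compactly supported, and nonincreasing on [0,∞), then their convolution g(x) = ∫ e(y) f(x−y) dy is also even, nonnegative, compactly supported, and nonincreasing on [0,∞). -/
/-!
For `0 ≤ x ≤ y` and `g = convF e f`, the substitution `t ↦ x + y - t` together with evenness of
`f` turns `∫ e (x + y - t) * f (x - t) dt` into `g y` and `∫ e (x + y - t) * f (y - t) dt` into
`g x`, so `2 (g x - g y) = ∫ (e t - e (x + y - t)) * (f (x - t) - f (y - t)) dt`.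
Both factors of this integrand have the sign of `x + y - 2 t`, because `|t| ≤ |x + y - t|` and
`|x - t| ≤ |y - t|` both amount to `2 t ≤ x + y`; hence `g x ≥ g y`.
-/

open MeasureTheory Real Set

noncomputable def convF (f g : ℝ → ℝ) : ℝ → ℝ := fun x => ∫ y : ℝ, f y * g (x - y)

structure IsEvenBump (e : ℝ → ℝ) : Prop where
  even : e.Even
  nonneg : 0 ≤ e
  hasCompactSupport : HasCompactSupport e
  antitoneOn : AntitoneOn e (Ici 0)

theorem isEvenBump_iff {e : ℝ → ℝ} :
    IsEvenBump e ↔ (∀ x, e x = e (-x)) ∧ (∀ x, 0 ≤ e x) ∧ HasCompactSupport e ∧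
      ∀ x y, 0 ≤ x → x ≤ y → e y ≤ e x :=
  ⟨fun ⟨hev, hnn, hcs, hanti⟩ => ⟨fun x => (hev x).symm, hnn, hcs,
      fun _ _ hx hxy => hanti hx (hx.trans hxy) hxy⟩,
    fun ⟨hev, hnn, hcs, hanti⟩ => ⟨fun x => (hev x).symm, hnn, hcs,
      fun x hx y _ hxy => hanti x y hx hxy⟩⟩

namespace Function.Even

variable {e f : ℝ → ℝ}

theorem apply_abs (hf : f.Even) (x : ℝ) : f |x| = f x := by
  rcases abs_choice x with h | h <;> rw [h]
  exact hf x

theorem apply_le_of_abs_le (hf : f.Even) (hanti : AntitoneOn f (Ici 0)) {u v : ℝ}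
    (h : |u| ≤ |v|) : f v ≤ f u := by
  rw [← hf.apply_abs u, ← hf.apply_abs v]
  exact hanti (abs_nonneg u) (abs_nonneg v) h

theorem le_apply_zero (hf : f.Even) (hanti : AntitoneOn f (Ici 0)) (x : ℝ) : f x ≤ f 0 :=
  hf.apply_le_of_abs_le hanti (by simp)

theorem measurable_of_antitoneOn (hf : f.Even) (hanti : AntitoneOn f (Ici 0)) :
    Measurable f := by
  have hg : Antitone fun x => f (max x 0) := fun x y hxy =>
    hanti (le_max_right x 0) (le_max_right y 0) (max_le_max_right 0 hxy)
  have hfg : f = (fun x => f (max x 0)) ∘ abs := by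
    ext x
    simp [hf.apply_abs]
  rw [hfg]
  exact hg.measurable.comp continuous_abs.measurable

theorem integral_comp_add_sub_mul_eq_convF (hf : f.Even) (x y : ℝ) :
    ∫ t, e (x + y - t) * f (x - t) = convF e f y := by
  calc ∫ t, e (x + y - t) * f (x - t) = ∫ t, e (x + y - t) * f (y - (x + y - t)) := by
        congr with t
        rw [← hf (x - t)]
        ring_nf
    _ = convF e f y := integral_sub_left_eq_self (fun t => e t * f (y - t)) volume (x + y)

theorem sub_mul_sub_nonneg (he : e.Even) (hf : f.Even)
    (he_anti : AntitoneOn e (Ici 0)) (hf_anti : AntitoneOn f (Ici 0))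
    {x y : ℝ} (hx : 0 ≤ x) (hxy : x ≤ y) (t : ℝ) :
    0 ≤ (e t - e (x + y - t)) * (f (x - t) - f (y - t)) := by
  rcases le_total (2 * t) (x + y) with ht | ht
  · refine mul_nonneg (sub_nonneg.mpr ?_) (sub_nonneg.mpr ?_)
    · exact he.apply_le_of_abs_le he_anti (abs_le_abs (by linarith) (by linarith))
    · exact hf.apply_le_of_abs_le hf_anti (abs_le_abs (by linarith) (by linarith))
  · refine mul_nonneg_of_nonpos_of_nonpos (sub_nonpos.mpr ?_) (sub_nonpos.mpr ?_)
    · exact he.apply_le_of_abs_le he_anti (abs_le_abs (by linarith) (by linarith))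
    · refine hf.apply_le_of_abs_le hf_anti ?_
      rw [abs_sub_comm x]
      exact abs_le_abs (by linarith) (by linarith)

theorem convF (he : e.Even) (hf : f.Even) : (convF e f).Even := by
  intro x
  unfold _root_.convF
  rw [← integral_neg_eq_self]
  congr with t
  rw [he, ← hf]
  ring_nf

end Function.Even

theorem HasCompactSupport.convF {e f : ℝ → ℝ} (he : HasCompactSupport e)
    (hf : HasCompactSupport f) : HasCompactSupport (convF e f) :=
  he.convolution (ContinuousLinearMap.mul ℝ ℝ) hf

namespace IsEvenBump

variable {e f : ℝ → ℝ}

theorem measurable (he : IsEvenBump e) : Measurable e :=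
  he.even.measurable_of_antitoneOn he.antitoneOn

theorem norm_le (he : IsEvenBump e) (x : ℝ) : ‖e x‖ ≤ e 0 := by
  rw [Real.norm_of_nonneg (he.nonneg x)]
  exact he.even.le_apply_zero he.antitoneOn x

theorem integrable (he : IsEvenBump e) : Integrable e := by
  rw [← integrableOn_iff_integrable_of_support_subset (subset_tsupport e)]
  exact Measure.integrableOn_of_bounded he.hasCompactSupport.measure_lt_top.ne
    he.measurable.aestronglyMeasurable (ae_of_all _ he.norm_le)

theorem integrable_mul_comp_sub {φ : ℝ → ℝ} (hf : IsEvenBump f) (hφ : Integrable φ) (x : ℝ) :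
    Integrable fun t => φ t * f (x - t) :=
  hφ.mul_bdd (hf.measurable.comp (measurable_const.sub measurable_id)).aestronglyMeasurable
    (ae_of_all _ fun t => hf.norm_le (x - t))

theorem convF_antitoneOn (he : IsEvenBump e) (hf : IsEvenBump f) :
    AntitoneOn (convF e f) (Ici 0) := by
  intro x hx y _ hxy
  have hint : ∀ a b : ℝ, Integrable fun t => e (a - t) * f (b - t) := fun a b =>
    hf.integrable_mul_comp_sub (he.integrable.comp_sub_left a) b
  have hint₀ : ∀ b : ℝ, Integrable fun t => e t * f (b - t) := fun b =>
    hf.integrable_mul_comp_sub he.integrable b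
  have hpair : ∫ t, (e t - e (x + y - t)) * (f (x - t) - f (y - t)) =
      (convF e f x - convF e f y) - (convF e f y - convF e f x) := by
    simp_rw [sub_mul, mul_sub]
    rw [integral_sub ((hint₀ x).sub' (hint₀ y)) ((hint _ x).sub' (hint _ y)),
      integral_sub (hint₀ x) (hint₀ y), integral_sub (hint _ x) (hint _ y),
      hf.even.integral_comp_add_sub_mul_eq_convF, add_comm x y,
      hf.even.integral_comp_add_sub_mul_eq_convF]
    rfl
  have hnonneg : 0 ≤ ∫ t, (e t - e (x + y - t)) * (f (x - t) - f (y - t)) :=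
    integral_nonneg fun t => he.even.sub_mul_sub_nonneg hf.even he.antitoneOn hf.antitoneOn hx hxy t
  linarith

theorem convF (he : IsEvenBump e) (hf : IsEvenBump f) : IsEvenBump (convF e f) where
  even := he.even.convF hf.even
  nonneg _ := integral_nonneg fun t => mul_nonneg (he.nonneg t) (hf.nonneg _)
  hasCompactSupport := he.hasCompactSupport.convF hf.hasCompactSupport
  antitoneOn := he.convF_antitoneOn hf

end IsEvenBump

theorem convolution_even_bump_general (e f : ℝ → ℝ)
    (he_even : ∀ x, e x = e (-x)) (hf_even : ∀ x, f x = f (-x))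
    (he_nonneg : ∀ x, 0 ≤ e x) (hf_nonneg : ∀ x, 0 ≤ f x)
    (he_supp : HasCompactSupport e) (hf_supp : HasCompactSupport f)
    (he_mono : ∀ x y, 0 ≤ x → x ≤ y → e y ≤ e x)
    (hf_mono : ∀ x y, 0 ≤ x → x ≤ y → f y ≤ f x) :
    (∀ x, convF e f x = convF e f (-x)) ∧
    (∀ x, 0 ≤ convF e f x) ∧
    HasCompactSupport (convF e f) ∧
    (∀ x y, 0 ≤ x → x ≤ y → convF e f y ≤ convF e f x) :=
  isEvenBump_iff.mp <| (isEvenBump_iff.mpr ⟨he_even, he_nonneg, he_supp, he_mono⟩).convF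
    (isEvenBump_iff.mpr ⟨hf_even, hf_nonneg, hf_supp, hf_mono⟩)

/-- The convolution of two even bumps (even, nonnegative, compactly supported,
nonincreasing on `[0,∞)`, measurable and bounded) is again an even bump. -/
theorem convolution_even_bump (e f : ℝ → ℝ)
    (he_meas : Measurable e) (hf_meas : Measurable f)
    (he_bdd : ∃ M, ∀ x, |e x| ≤ M) (hf_bdd : ∃ M, ∀ x, |f x| ≤ M)
    (he_even : ∀ x, e x = e (-x)) (hf_even : ∀ x, f x = f (-x))
    (he_nonneg : ∀ x, 0 ≤ e x) (hf_nonneg : ∀ x, 0 ≤ f x)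
    (he_supp : HasCompactSupport e) (hf_supp : HasCompactSupport f)
    (he_mono : ∀ x y, 0 ≤ x → x ≤ y → e y ≤ e x)
    (hf_mono : ∀ x y, 0 ≤ x → x ≤ y → f y ≤ f x) :
    (∀ x, convF e f x = convF e f (-x)) ∧
    (∀ x, 0 ≤ convF e f x) ∧
    HasCompactSupport (convF e f) ∧
    (∀ x y, 0 ≤ x → x ≤ y → convF e f y ≤ convF e f x) :=
  convolution_even_bump_general e f he_even hf_even he_nonneg hf_nonneg he_supp hf_supp he_mono
    hf_mono
end

section
/- If e and f are even bumps, then their convolution g = e * f satisfies g(x−s) ≥ g(x+s) for all x > 0 and s > 0; equivalently, g is nonincreasing on [0,∞). -/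
open MeasureTheory Real

/-- If `e` and `f` are even bumps, then `g = e * f` satisfies `g(x−s) ≥ g(x+s)`
for all `x > 0` and `s > 0`. -/
theorem convolution_even_bump_mono (e f : ℝ → ℝ)
    (he_meas : Measurable e) (hf_meas : Measurable f)
    (he_bdd : ∃ M, ∀ x, |e x| ≤ M) (hf_bdd : ∃ M, ∀ x, |f x| ≤ M)
    (he_even : ∀ x, e x = e (-x)) (hf_even : ∀ x, f x = f (-x))
    (he_nonneg : ∀ x, 0 ≤ e x) (hf_nonneg : ∀ x, 0 ≤ f x)
    (he_supp : HasCompactSupport e) (hf_supp : HasCompactSupport f)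
    (he_mono : ∀ x y, 0 ≤ x → x ≤ y → e y ≤ e x)
    (hf_mono : ∀ x y, 0 ≤ x → x ≤ y → f y ≤ f x) :
    ∀ x s : ℝ, 0 < x → 0 < s → convF e f (x + s) ≤ convF e f (x - s) := by
  obtain ⟨Me, hMe⟩ := he_bdd
  obtain ⟨Mf, hMf⟩ := hf_bdd
  -- integrability of e and f
  have he_int : Integrable e := by
    have h1 : IntegrableOn e (tsupport e) := by
      apply Measure.integrableOn_of_bounded (M := Me) he_supp.measure_lt_top.ne
        he_meas.aestronglyMeasurable
      exact Filter.Eventually.of_forall fun y => by simpa [Real.norm_eq_abs] using hMe y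
    exact (integrableOn_iff_integrable_of_support_subset (subset_tsupport e)).mp h1
  have hf_int : Integrable f := by
    have h1 : IntegrableOn f (tsupport f) := by
      apply Measure.integrableOn_of_bounded (M := Mf) hf_supp.measure_lt_top.ne
        hf_meas.aestronglyMeasurable
      exact Filter.Eventually.of_forall fun y => by simpa [Real.norm_eq_abs] using hMf y
    exact (integrableOn_iff_integrable_of_support_subset (subset_tsupport f)).mp h1
  -- even + monotone
  have hE : ∀ a b : ℝ, |a| ≤ b → e b ≤ e a := by
    intro a b h
    have ha : e |a| = e a := by
      rcases abs_cases a with ⟨h1, _⟩ | ⟨h1, _⟩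
      · rw [h1]
      · rw [h1, ← he_even]
    calc e b ≤ e |a| := he_mono _ _ (abs_nonneg a) h
    _ = e a := ha
  have hF : ∀ a b : ℝ, |a| ≤ b → f b ≤ f a := by
    intro a b h
    have ha : f |a| = f a := by
      rcases abs_cases a with ⟨h1, _⟩ | ⟨h1, _⟩
      · rw [h1]
      · rw [h1, ← hf_even]
    calc f b ≤ f |a| := hf_mono _ _ (abs_nonneg a) h
    _ = f a := ha
  intro x s hx hs
  -- master integrability lemma
  have I : ∀ a c : ℝ, Integrable (fun u => e (a - u) * f (u - c)) := by
    intro a c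
    have hg : Integrable (fun u => f (u - c)) := hf_int.comp_sub_right c
    exact hg.bdd_mul (c := Me)
      ((he_meas.comp (measurable_const.sub measurable_id)).aestronglyMeasurable)
      (Filter.Eventually.of_forall fun y => by simpa [Real.norm_eq_abs] using hMe (a - y))
  have IA : Integrable (fun u => e (x - u) * f (u - s)) := I x s
  have IB : Integrable (fun u => e (x - u) * f (u + s)) := by
    simpa [sub_neg_eq_add] using I x (-s)
  have hee : ∀ u : ℝ, e (-x - u) = e (x + u) := by
    intro u
    rw [he_even (x + u)]; congr 1; ring
  have IC : Integrable (fun u => e (x + u) * f (u - s)) := by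
    refine (I (-x) s).congr (Filter.Eventually.of_forall fun u => ?_)
    simp only
    rw [hee u]
  have ID : Integrable (fun u => e (x + u) * f (u + s)) := by
    refine (I (-x) (-s)).congr (Filter.Eventually.of_forall fun u => ?_)
    simp only
    rw [hee u, sub_neg_eq_add]
  -- convF values as shifted integrals
  have hA : convF e f (x - s) = ∫ u : ℝ, e (x - u) * f (u - s) := by
    have h0 : convF e f (x - s) = ∫ y : ℝ, e y * f (x - s - y) := rfl
    rw [h0, ← integral_sub_left_eq_self (fun u => e u * f (x - s - u)) volume x]
    refine integral_congr_ae (Filter.Eventually.of_forall fun u => ?_)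
    simp only
    rw [show x - s - (x - u) = u - s by ring]
  have hB : convF e f (x + s) = ∫ u : ℝ, e (x - u) * f (u + s) := by
    have h0 : convF e f (x + s) = ∫ y : ℝ, e y * f (x + s - y) := rfl
    rw [h0, ← integral_sub_left_eq_self (fun u => e u * f (x + s - u)) volume x]
    refine integral_congr_ae (Filter.Eventually.of_forall fun u => ?_)
    simp only
    rw [show x + s - (x - u) = u + s by ring]
  -- reflection identities
  have hA' : (∫ u : ℝ, e (x + u) * f (u + s)) = ∫ u : ℝ, e (x - u) * f (u - s) := by
    rw [← integral_neg_eq_self (fun u => e (x + u) * f (u + s)) volume]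
    refine integral_congr_ae (Filter.Eventually.of_forall fun u => ?_)
    simp only
    rw [show x + -u = x - u by ring, hf_even (-u + s), show -(-u + s) = u - s by ring]
  have hB' : (∫ u : ℝ, e (x + u) * f (u - s)) = ∫ u : ℝ, e (x - u) * f (u + s) := by
    rw [← integral_neg_eq_self (fun u => e (x + u) * f (u - s)) volume]
    refine integral_congr_ae (Filter.Eventually.of_forall fun u => ?_)
    simp only
    rw [show x + -u = x - u by ring, hf_even (-u - s), show -(-u - s) = u + s by ring]
  -- pointwise nonnegativity of the symmetrized integrand
  have hpt : ∀ u : ℝ, 0 ≤ (e (x - u) - e (x + u)) * (f (u - s) - f (u + s)) := by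
    intro u
    rcases le_or_gt 0 u with hu | hu
    · refine mul_nonneg (sub_nonneg.mpr ?_) (sub_nonneg.mpr ?_)
      · exact hE (x - u) (x + u) (by rw [abs_le]; constructor <;> linarith)
      · exact hF (u - s) (u + s) (by rw [abs_le]; constructor <;> linarith)
    · have h1 : e (x - u) - e (x + u) ≤ 0 := by
        refine sub_nonpos.mpr ?_
        exact hE (x + u) (x - u) (by rw [abs_le]; constructor <;> linarith)
      have h2 : f (u - s) - f (u + s) ≤ 0 := by
        have hrw : f (u - s) = f (s - u) := by
          rw [hf_even (u - s)]; congr 1; ring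
        rw [hrw]
        refine sub_nonpos.mpr ?_
        exact hF (u + s) (s - u) (by rw [abs_le]; constructor <;> linarith)
      have h3 : (e (x - u) - e (x + u)) * (f (u - s) - f (u + s))
          = (-(e (x - u) - e (x + u))) * (-(f (u - s) - f (u + s))) := by ring
      rw [h3]
      exact mul_nonneg (neg_nonneg.mpr h1) (neg_nonneg.mpr h2)
  have hsum : 0 ≤ ∫ u : ℝ, (e (x - u) - e (x + u)) * (f (u - s) - f (u + s)) :=
    integral_nonneg hpt
  have hsplit : (∫ u : ℝ, (e (x - u) - e (x + u)) * (f (u - s) - f (u + s)))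
      = (∫ u : ℝ, e (x - u) * f (u - s)) - (∫ u : ℝ, e (x - u) * f (u + s))
        - (∫ u : ℝ, e (x + u) * f (u - s)) + (∫ u : ℝ, e (x + u) * f (u + s)) := by
    have h1 : Integrable (fun u => e (x - u) * f (u - s) - e (x - u) * f (u + s)) :=
      IA.sub IB
    have h2 : Integrable
        (fun u => (e (x - u) * f (u - s) - e (x - u) * f (u + s)) - e (x + u) * f (u - s)) :=
      h1.sub IC
    calc (∫ u : ℝ, (e (x - u) - e (x + u)) * (f (u - s) - f (u + s)))
        = ∫ u : ℝ, ((e (x - u) * f (u - s) - e (x - u) * f (u + s))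
            - e (x + u) * f (u - s)) + e (x + u) * f (u + s) := by
          refine integral_congr_ae (Filter.Eventually.of_forall fun u => ?_)
          ring
      _ = (∫ u : ℝ, (e (x - u) * f (u - s) - e (x - u) * f (u + s))
            - e (x + u) * f (u - s)) + ∫ u : ℝ, e (x + u) * f (u + s) :=
          integral_add h2 ID
      _ = _ := by rw [integral_sub h1 IC, integral_sub IA IB]
  rw [hA', hB'] at hsplit
  rw [hA, hB]
  linarith [hsum, hsplit]
end

section
/- For n = 3 and any a₁, a₂, a₃ ≥ 0, the integral I₃²(a₁,a₂,a₃) = ∫_0^∞ t² ∏_{i=1}^3 aᵢ sinc(aᵢ t) dt = ∫_0^∞ (sin(a₁t) sin(a₂t) sin(a₃t) / t) dt is nonnegative. -/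
/-!
Product-to-sum writes `sin (a₁t) sin (a₂t) sin (a₃t)` as
`(sin (b₁t) + sin (b₂t) + sin (b₃t) - sin (b₄t)) / 4` with `b₁ = a₁ + a₂ - a₃`,
`b₂ = a₁ - a₂ + a₃`, `b₃ = -a₁ + a₂ + a₃`, `b₄ = a₁ + a₂ + a₃`. Scaling `t ↦ |c| t` gives
`∫_0^∞ sin (c t) / t = sign c · D` with `D = ∫_0^∞ sin t / t`, so the integral equals
`(sign b₁ + sign b₂ + sign b₃ - sign b₄) · D / 4`. The sign combination is nonnegative because
at most one of `b₁, b₂, b₃` is negative, and all of them vanish when `b₄ = 0`. The Dirichlet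
integral `D` converges by one integration by parts, and `D ≥ 0` because on each period
`[2πk, 2π(k+1)]` the positive half of `sin t / t` dominates the negative half.
-/

open MeasureTheory Real Filter Set intervalIntegral Topology

lemma intervalIntegrable_sin_mul_div (c a b : ℝ) :
    IntervalIntegrable (fun t => sin (c * t) / t) volume a b := by
  refine (intervalIntegrable_const (c := |c|)).mono_fun' ?_ (ae_of_all _ fun t => ?_)
  · exact (by fun_prop : Measurable fun t => sin (c * t) / t).aestronglyMeasurable
  · rcases eq_or_ne t 0 with rfl | ht
    · simp
    · dsimp only
      rw [norm_div, norm_eq_abs, norm_eq_abs, div_le_iff₀ (abs_pos.2 ht), ← abs_mul]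
      exact abs_sin_le_abs

lemma intervalIntegrable_sin_div (a b : ℝ) :
    IntervalIntegrable (fun t => sin t / t) volume a b := by
  simpa using intervalIntegrable_sin_mul_div 1 a b

lemma tendsto_cos_div_atTop : Tendsto (fun T : ℝ => cos T / T) atTop (𝓝 0) := by
  simp only [div_eq_inv_mul]
  refine tendsto_inv_atTop_zero.zero_mul_isBoundedUnder_le ⟨1, ?_⟩
  simp [abs_cos_le_one]

lemma integrableOn_cos_div_sq {a : ℝ} (ha : 0 < a) :
    IntegrableOn (fun t => cos t / t ^ 2) (Ioi a) := by
  refine (integrableOn_Ioi_rpow_of_lt (by norm_num : (-2 : ℝ) < -1) ha).mono'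
    (by fun_prop : Measurable fun t : ℝ => cos t / t ^ 2).aestronglyMeasurable ?_
  filter_upwards [ae_restrict_mem measurableSet_Ioi] with t ht
  have ht0 : 0 < t := ha.trans ht
  rw [rpow_neg ht0.le, rpow_two, norm_div, norm_eq_abs, norm_pow, norm_eq_abs, abs_of_pos ht0,
    div_eq_mul_inv, ← one_div]
  exact mul_le_of_le_one_left (by positivity) (abs_cos_le_one t)

lemma integral_sin_div_eq_sub_integral_cos_div_sq {a b : ℝ} (ha : 0 < a) (hab : a ≤ b) :
    ∫ t in a..b, sin t / t = cos a / a - cos b / b - ∫ t in a..b, cos t / t ^ 2 := by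
  have hne : ∀ x ∈ uIcc a b, x ≠ 0 := fun x hx =>
    (ha.trans_le (uIcc_of_le hab ▸ hx).1).ne'
  have hparts := intervalIntegral.integral_mul_deriv_eq_deriv_mul (a := a) (b := b)
    (u := fun x => x⁻¹) (v := fun x => -cos x) (u' := fun x => -(x ^ 2)⁻¹) (v' := sin)
    (fun x hx => hasDerivAt_inv (hne x hx))
    (fun x _ => (hasDerivAt_cos x).neg.congr_deriv (neg_neg _))
    ((continuousOn_pow 2).inv₀ fun x hx => pow_ne_zero 2 (hne x hx)).neg.intervalIntegrable
    (continuous_sin.intervalIntegrable a b)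
  simp only [mul_neg, neg_mul, neg_neg, sub_neg_eq_add] at hparts
  simp only [div_eq_inv_mul, hparts]
  ring

lemma exists_tendsto_integral_sin_div :
    ∃ D : ℝ, Tendsto (fun T => ∫ t in (0:ℝ)..T, sin t / t) atTop (𝓝 D) := by
  have htail : Tendsto (fun T => ∫ t in (1:ℝ)..T, sin t / t) atTop
      (𝓝 (cos 1 / 1 - 0 - ∫ t in Ioi 1, cos t / t ^ 2)) := by
    refine Tendsto.congr' ?_ (((tendsto_const_nhds.sub tendsto_cos_div_atTop).sub
      (intervalIntegral_tendsto_integral_Ioi 1 (integrableOn_cos_div_sq one_pos) tendsto_id)))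
    filter_upwards [eventually_ge_atTop 1] with T hT
    exact (integral_sin_div_eq_sub_integral_cos_div_sq one_pos hT).symm
  exact ⟨_, (tendsto_const_nhds.add htail).congr fun T =>
    integral_add_adjacent_intervals (intervalIntegrable_sin_div 0 1)
      (intervalIntegrable_sin_div 1 T)⟩

lemma sin_div_add_sin_add_pi_div_nonneg {u : ℝ} (hu : 0 ≤ u) (hsin : 0 ≤ sin u) :
    0 ≤ sin u / u + sin (u + π) / (u + π) := by
  rcases hu.eq_or_lt with rfl | hu
  · simp
  rw [sin_add_pi, neg_div, ← sub_eq_add_neg, sub_nonneg]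
  exact div_le_div_of_nonneg_left hsin hu (by linarith [pi_pos])

lemma integral_sin_div_period_nonneg (k : ℕ) :
    0 ≤ ∫ t in 2 * π * k..2 * π * (k + 1), sin t / t := by
  set x := 2 * π * k
  have hx : 0 ≤ x := by positivity
  have hshift : IntervalIntegrable (fun t => sin (t + π) / (t + π)) volume x (x + π) := by
    simpa using (intervalIntegrable_sin_div (x + π) (x + π + π)).comp_add_right π
  rw [show 2 * π * (k + 1) = x + π + π by ring,
    ← integral_add_adjacent_intervals (intervalIntegrable_sin_div x (x + π))
      (intervalIntegrable_sin_div _ _),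
    ← integral_comp_add_right (fun t => sin t / t), ← integral_add
      (intervalIntegrable_sin_div _ _) hshift]
  refine integral_nonneg (by linarith [pi_pos]) fun u hu => ?_
  refine sin_div_add_sin_add_pi_div_nonneg (hx.trans hu.1) ?_
  rw [← sin_sub_nat_mul_two_pi u k]
  exact sin_nonneg_of_nonneg_of_le_pi (by linarith [hu.1]) (by linarith [hu.2])

lemma integral_sin_div_two_pi_mul_nonneg (n : ℕ) :
    0 ≤ ∫ t in (0:ℝ)..2 * π * n, sin t / t := by
  have h := sum_integral_adjacent_intervals (a := fun k : ℕ => 2 * π * k) (n := n)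
    (μ := volume) fun k _ => intervalIntegrable_sin_div _ _
  simp only [Nat.cast_zero, mul_zero, Nat.cast_succ] at h
  exact h ▸ Finset.sum_nonneg fun k _ => integral_sin_div_period_nonneg k

lemma nonneg_of_tendsto_integral_sin_div {D : ℝ}
    (hD : Tendsto (fun T => ∫ t in (0:ℝ)..T, sin t / t) atTop (𝓝 D)) : 0 ≤ D :=
  ge_of_tendsto' (hD.comp (tendsto_natCast_atTop_atTop.const_mul_atTop (by positivity)))
    integral_sin_div_two_pi_mul_nonneg

lemma integral_sin_mul_div_of_pos {c : ℝ} (hc : 0 < c) (T : ℝ) :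
    ∫ t in (0:ℝ)..T, sin (c * t) / t = ∫ u in (0:ℝ)..c * T, sin u / u := by
  have hscale (t : ℝ) : sin (c * t) / t = c * (sin (c * t) / (c * t)) := by
    rcases eq_or_ne t 0 with rfl | ht
    · simp
    · field_simp
  simp only [hscale, intervalIntegral.integral_const_mul]
  simpa using mul_integral_comp_mul_left (f := fun u => sin u / u) (c := c) (a := 0) (b := T)

lemma tendsto_integral_sin_mul_div {D : ℝ}
    (hD : Tendsto (fun T => ∫ t in (0:ℝ)..T, sin t / t) atTop (𝓝 D)) (c : ℝ) :
    Tendsto (fun T => ∫ t in (0:ℝ)..T, sin (c * t) / t) atTop (𝓝 (Real.sign c * D)) := by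
  have hpos {c : ℝ} (hc : 0 < c) :
      Tendsto (fun T => ∫ t in (0:ℝ)..T, sin (c * t) / t) atTop (𝓝 D) :=
    (hD.comp (tendsto_id.const_mul_atTop hc)).congr fun T =>
      (integral_sin_mul_div_of_pos hc T).symm
  rcases lt_trichotomy c 0 with hc | rfl | hc
  · rw [Real.sign_of_neg hc, neg_one_mul]
    have hodd (t : ℝ) : sin (c * t) / t = -(sin (-c * t) / t) := by
      rw [neg_mul, sin_neg, neg_div, neg_neg]
    simpa only [hodd, intervalIntegral.integral_neg] using (hpos (neg_pos.2 hc)).neg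
  · simp
  · simpa [Real.sign_of_pos hc] using hpos hc

lemma sin_mul_sin_mul_sin (x y z : ℝ) :
    sin x * sin y * sin z
      = (sin (x + y - z) + sin (x - y + z) + sin (-x + y + z) - sin (x + y + z)) / 4 := by
  simp only [sin_add, sin_sub, cos_add, cos_sub, sin_neg, cos_neg]
  ring

lemma integral_sin_mul_sin_mul_sin_div (a₁ a₂ a₃ T : ℝ) :
    ∫ t in (0:ℝ)..T, sin (a₁ * t) * sin (a₂ * t) * sin (a₃ * t) / t
      = ((∫ t in (0:ℝ)..T, sin ((a₁ + a₂ - a₃) * t) / t)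
        + (∫ t in (0:ℝ)..T, sin ((a₁ - a₂ + a₃) * t) / t)
        + (∫ t in (0:ℝ)..T, sin ((-a₁ + a₂ + a₃) * t) / t)
        - ∫ t in (0:ℝ)..T, sin ((a₁ + a₂ + a₃) * t) / t) / 4 := by
  have hi (c : ℝ) := intervalIntegrable_sin_mul_div c 0 T
  rw [← integral_add (hi _) (hi _), ← integral_add ((hi _).add (hi _)) (hi _),
    ← integral_sub (((hi _).add (hi _)).add (hi _)) (hi _), ← intervalIntegral.integral_div]
  congr 1 with t
  rw [sin_mul_sin_mul_sin]
  ring_nf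

lemma sign_combination_nonneg {a₁ a₂ a₃ : ℝ} (h₁ : 0 ≤ a₁) (h₂ : 0 ≤ a₂) (h₃ : 0 ≤ a₃) :
    0 ≤ Real.sign (a₁ + a₂ - a₃) + Real.sign (a₁ - a₂ + a₃) + Real.sign (-a₁ + a₂ + a₃)
      - Real.sign (a₁ + a₂ + a₃) := by
  simp only [Real.sign]
  split_ifs <;> linarith

/-- For `a₁, a₂, a₃ ≥ 0`, the improper integral
`∫_0^∞ sin(a₁t) sin(a₂t) sin(a₃t) / t dt` converges and is nonnegative. -/
theorem I3_nonneg (a₁ a₂ a₃ : ℝ) (h₁ : 0 ≤ a₁) (h₂ : 0 ≤ a₂) (h₃ : 0 ≤ a₃) :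
    ∃ L : ℝ, Tendsto (fun T : ℝ =>
        ∫ t in (0:ℝ)..T, Real.sin (a₁ * t) * Real.sin (a₂ * t) * Real.sin (a₃ * t) / t)
      atTop (nhds L) ∧ 0 ≤ L := by
  obtain ⟨D, hD⟩ := exists_tendsto_integral_sin_div
  refine ⟨(Real.sign (a₁ + a₂ - a₃) + Real.sign (a₁ - a₂ + a₃) + Real.sign (-a₁ + a₂ + a₃)
      - Real.sign (a₁ + a₂ + a₃)) * D / 4, ?_, ?_⟩
  · simp only [integral_sin_mul_sin_mul_sin_div]
    have h (c : ℝ) := tendsto_integral_sin_mul_div hD c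
    convert ((((h (a₁ + a₂ - a₃)).add (h (a₁ - a₂ + a₃))).add (h (-a₁ + a₂ + a₃))).sub
      (h (a₁ + a₂ + a₃))).div_const 4 using 2
    ring
  · exact div_nonneg (mul_nonneg (sign_combination_nonneg h₁ h₂ h₃)
      (nonneg_of_tendsto_integral_sin_div hD)) zero_le_four
end

section
/- For n ≥ 3 and all a₁,…,aₙ > 0, the integral ∫_0^∞ t ∏_{i=1}^n aᵢ sinc(aᵢ t) dt = ∫_0^∞ t^{1−n} ∏_{i=1}^n sin(aᵢ t) dt is nonnegative. -/
/-!
Since `t · a₀ sinc (a₀ t) = sin (a₀ t)` and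
`sin (y t) · b sinc (b t) = ∫ ½𝟙_{[-b,b]}(z - y) sin (z t) dz`, induction on the remaining factors
writes the integrand as a sine transform `f t = ∫ ν y sin (y t) dy`, where `ν` is a box centred
at `a₀` convolved with boxes centred at `0`. Such a `ν` is right-heavy, `ν (-y) ≤ ν y` for
`y ≥ 0`: this holds for the first box and is preserved by convolution with any even kernel that
decreases in `|x|`. With Abel damping,
`∫₀^∞ e^{-εt} f t dt = ∫ ν y · y / (ε² + y²) dy = ∫_{y > 0} (ν y - ν (-y)) · y / (ε² + y²) dy ≥ 0`,
and `ε → 0⁺` gives the claim by dominated convergence, `f` being integrable on `(0, ∞)` once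
there are at least three factors.
-/

open MeasureTheory Real

noncomputable def sinc (t : ℝ) : ℝ := if t = 0 then 1 else Real.sin t / t

open Set Filter Topology
open scoped Convolution

lemma integral_nonneg_of_nonneg_add_neg {g : ℝ → ℝ} (hg : Integrable g)
    (h : ∀ y, 0 < y → 0 ≤ g y + g (-y)) : 0 ≤ ∫ y, g y := by
  have hsym : ∀ᵐ y, 0 ≤ g y + g (-y) := by
    filter_upwards [Measure.ae_ne volume 0] with y hy
    rcases hy.lt_or_gt with hy | hy
    · simpa [add_comm] using h (-y) (neg_pos.2 hy)
    · exact h y hy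
  have := integral_nonneg_of_ae hsym
  rw [integral_add hg hg.comp_neg, integral_neg_eq_self] at this
  linarith

lemma tendsto_integral_exp_neg_mul_mul {f : ℝ → ℝ} (hf : IntegrableOn f (Ioi 0)) :
    Tendsto (fun ε => ∫ t in Ioi 0, Real.exp (-ε * t) * f t) (𝓝[>] 0)
      (𝓝 (∫ t in Ioi 0, f t)) := by
  refine tendsto_integral_filter_of_dominated_convergence (fun t => ‖f t‖)
    (Eventually.of_forall fun ε => (by fun_prop : Continuous fun t => Real.exp (-ε * t))
      |>.aestronglyMeasurable.mul hf.aestronglyMeasurable)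
    ?_ hf.norm (ae_of_all _ fun t => ?_)
  · filter_upwards [self_mem_nhdsWithin] with ε (hε : 0 < ε)
    filter_upwards [ae_restrict_mem measurableSet_Ioi] with t (ht : 0 < t)
    rw [norm_mul, norm_of_nonneg (exp_nonneg _)]
    exact mul_le_of_le_one_left (norm_nonneg _) (exp_le_one_iff.2 (by nlinarith))
  · have : Continuous fun ε => Real.exp (-ε * t) * f t := by fun_prop
    simpa using this.continuousWithinAt.tendsto (x := 0) (s := Ioi 0)

lemma integral_exp_neg_mul_mul_sin {ε : ℝ} (hε : 0 < ε) (y : ℝ) :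
    ∫ t in Ioi 0, Real.exp (-ε * t) * Real.sin (y * t) = y / (ε ^ 2 + y ^ 2) := by
  set a : ℂ := -ε + y * Complex.I
  have ha : a.re < 0 := by simpa [a] using hε
  have him : ∀ t : ℝ, (Complex.exp (a * t)).im = Real.exp (-ε * t) * Real.sin (y * t) := by
    intro t
    simp [a, Complex.exp_im]
  have := integral_im (𝕜 := ℂ) (integrableOn_exp_mul_complex_Ioi ha 0)
  simp only [RCLike.im_to_complex, him, integral_exp_mul_complex_Ioi ha] at this
  rw [this]
  simp [a, Complex.normSq_apply, sq, neg_div]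

def RightHeavy (ν : ℝ → ℝ) : Prop := ∀ y, 0 ≤ y → ν (-y) ≤ ν y

lemma rightHeavy_comp_sub {h : ℝ → ℝ} (hh : ∀ ⦃x y⦄, |x| ≤ |y| → h y ≤ h x) {c : ℝ}
    (hc : 0 ≤ c) : RightHeavy fun y => h (y - c) := by
  intro y hy
  refine hh (abs_le.2 ⟨?_, ?_⟩) <;> rw [abs_of_nonpos (by linarith)] <;> linarith

lemma RightHeavy.convolution {ν h : ℝ → ℝ} (hν : RightHeavy ν) (hνi : Integrable ν)
    (hh : ∀ ⦃x y⦄, |x| ≤ |y| → h y ≤ h x) (hm : Measurable h) (h0 : ∀ x, 0 ≤ h x) :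
    RightHeavy (ν ⋆ h) := by
  have heven : ∀ x, h (-x) = h x := fun x => le_antisymm (hh (abs_neg x).ge) (hh (abs_neg x).le)
  intro z hz
  have hint : ∀ w, Integrable fun y => ν y * h (w - y) := fun w =>
    hνi.mul_bdd (c := h 0) (hm.comp (measurable_const.sub measurable_id)).aestronglyMeasurable
      (ae_of_all _ fun y => by
        rw [norm_of_nonneg (h0 _)]
        exact hh (by simp))
  have hdiff : 0 ≤ ∫ y, ν y * (h (z - y) - h (-z - y)) := by
    refine integral_nonneg_of_nonneg_add_neg ?_ fun y hy => ?_
    · simp_rw [mul_sub]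
      exact (hint z).sub (hint (-z))
    · have hsplit : ν y * (h (z - y) - h (-z - y)) + ν (-y) * (h (z - -y) - h (-z - -y))
          = (ν y - ν (-y)) * (h (z - y) - h (z + y)) := by
        rw [← heven (-z - y), ← heven (-z - -y)]
        ring_nf
      rw [hsplit]
      refine mul_nonneg (sub_nonneg.2 (hν y hy.le)) (sub_nonneg.2 (hh ?_))
      rw [abs_of_pos (by linarith : 0 < z + y)]
      exact abs_sub_le_iff.2 ⟨by linarith, by linarith⟩
  simp only [convolution_lsmul, smul_eq_mul]
  simp_rw [mul_sub] at hdiff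
  rw [integral_sub (hint z) (hint (-z))] at hdiff
  linarith

noncomputable def boxKernel (b : ℝ) : ℝ → ℝ := (Icc (-b) b).indicator fun _ => 1 / 2

lemma boxKernel_nonneg (b x : ℝ) : 0 ≤ boxKernel b x :=
  indicator_nonneg (fun _ _ => by norm_num) x

lemma boxKernel_le_of_abs_le (b : ℝ) ⦃x y : ℝ⦄ (h : |x| ≤ |y|) : boxKernel b y ≤ boxKernel b x := by
  by_cases hy : y ∈ Icc (-b) b
  · have hx : x ∈ Icc (-b) b := abs_le.1 (h.trans (abs_le.2 hy))
    simp [boxKernel, hx, hy]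
  · simp [boxKernel, hy, indicator_nonneg]

lemma measurable_boxKernel (b : ℝ) : Measurable (boxKernel b) :=
  measurable_const.indicator measurableSet_Icc

lemma integrable_boxKernel (b : ℝ) : Integrable (boxKernel b) :=
  (integrable_indicator_iff measurableSet_Icc).2 (integrableOn_const measure_Icc_lt_top.ne)

lemma integral_boxKernel_mul {b : ℝ} (hb : 0 ≤ b) (g : ℝ → ℝ) :
    ∫ x, boxKernel b x * g x = (∫ x in -b..b, g x) / 2 := by
  have hind : ∀ x, boxKernel b x * g x = (Icc (-b) b).indicator (fun x => g x / 2) x := by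
    intro x
    by_cases hx : x ∈ Icc (-b) b <;> simp [boxKernel, hx, div_eq_inv_mul]
  simp_rw [hind, integral_indicator measurableSet_Icc, integral_Icc_eq_integral_Ioc,
    ← intervalIntegral.integral_of_le (neg_le_self hb), intervalIntegral.integral_div]

lemma sinc_eq_real_sinc : _root_.sinc = Real.sinc := rfl

lemma mul_mul_sinc (a t : ℝ) : t * (a * Real.sinc (a * t)) = Real.sin (a * t) := by
  rcases eq_or_ne (a * t) 0 with h | h
  · simp [h, mul_comm t a]
  · obtain ⟨ha, ht⟩ := mul_ne_zero_iff.1 h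
    rw [Real.sinc_of_ne_zero h]
    field_simp

lemma abs_mul_sinc_le_inv (a : ℝ) {t : ℝ} (ht : 0 < t) : |a * Real.sinc (a * t)| ≤ t⁻¹ := by
  rw [← mul_le_mul_iff_right₀ ht, mul_inv_cancel₀ ht.ne']
  nth_rw 1 [← abs_of_pos ht]
  rw [← abs_mul, mul_mul_sinc]
  exact abs_sin_le_one _

lemma integrableOn_Ioi_mul_prod_sinc {ι : Type*} [Fintype ι] (a : ι → ℝ)
    (hι : 3 ≤ Fintype.card ι) :
    IntegrableOn (fun t => t * ∏ i, a i * Real.sinc (a i * t)) (Ioi 0) := by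
  have hcont : Continuous fun t => t * ∏ i, a i * Real.sinc (a i * t) := by fun_prop
  rw [← Ioc_union_Ioi_eq_Ioi zero_le_one]
  refine hcont.integrableOn_Ioc.union ?_
  refine (integrableOn_Ioi_rpow_of_lt (by norm_num : (-2 : ℝ) < -1) zero_lt_one).mono'
    hcont.aestronglyMeasurable.restrict ?_
  filter_upwards [ae_restrict_mem measurableSet_Ioi] with t (ht : 1 < t)
  have ht0 : 0 < t := one_pos.trans ht
  calc ‖t * ∏ i, a i * Real.sinc (a i * t)‖
      ≤ t * (t⁻¹) ^ Fintype.card ι := by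
        rw [norm_mul, norm_of_nonneg ht0.le, norm_prod, ← Finset.card_univ,
          ← Finset.prod_const]
        gcongr with i
        exact abs_mul_sinc_le_inv _ ht0
    _ ≤ t * (t⁻¹) ^ 3 :=
        mul_le_mul_of_nonneg_left
          (pow_le_pow_of_le_one (by positivity) (inv_le_one_of_one_le₀ ht.le) hι) ht0.le
    _ = t ^ (-2 : ℝ) := by
        rw [rpow_neg ht0.le, rpow_two]
        field_simp

lemma integral_boxKernel_sub_mul_sin {b : ℝ} (hb : 0 ≤ b) (y t : ℝ) :
    ∫ z, boxKernel b (z - y) * Real.sin (z * t) = Real.sin (y * t) * (b * Real.sinc (b * t)) := by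
  have hshift := integral_sub_right_eq_self (μ := volume)
    (fun w => boxKernel b w * Real.sin ((w + y) * t)) y
  simp only [sub_add_cancel] at hshift
  rw [hshift, integral_boxKernel_mul hb]
  rcases eq_or_ne t 0 with rfl | ht
  · simp
  rw [← mul_left_inj' ht, mul_assoc (Real.sin _), mul_comm (b * _) t, mul_mul_sinc]
  have hprim := intervalIntegral.integral_comp_mul_add Real.sin ht (y * t) (a := -b) (b := b)
  simp only [integral_sin, smul_eq_mul] at hprim
  have hsin : ∀ x, Real.sin ((x + y) * t) = Real.sin (t * x + y * t) := fun x => by ring_nf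
  simp_rw [hsin, hprim, mul_neg, cos_add, cos_neg, sin_neg]
  field_simp
  ring

structure IsSineRep (f ν : ℝ → ℝ) : Prop where
  integrable : Integrable ν
  rightHeavy : RightHeavy ν
  eq_integral : ∀ t, f t = ∫ y, ν y * Real.sin (y * t)

lemma isSineRep_sin_mul_sinc {b c : ℝ} (hb : 0 ≤ b) (hc : 0 ≤ c) :
    IsSineRep (fun t => Real.sin (c * t) * (b * Real.sinc (b * t)))
      fun y => boxKernel b (y - c) where
  integrable := (integrable_boxKernel b).comp_sub_right c
  rightHeavy := rightHeavy_comp_sub (boxKernel_le_of_abs_le b) hc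
  eq_integral t := (integral_boxKernel_sub_mul_sin hb c t).symm

lemma IsSineRep.mul_sinc {f ν : ℝ → ℝ} (hf : IsSineRep f ν) {b : ℝ} (hb : 0 ≤ b) :
    IsSineRep (fun t => f t * (b * Real.sinc (b * t))) (ν ⋆ boxKernel b) where
  integrable := hf.integrable.integrable_convolution _ (integrable_boxKernel b)
  rightHeavy := hf.rightHeavy.convolution hf.integrable (boxKernel_le_of_abs_le b)
    (measurable_boxKernel b) (boxKernel_nonneg b)
  eq_integral t := by
    have hF : Integrable (Function.uncurry fun z y => ν y * boxKernel b (z - y) * Real.sin (z * t))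
        (volume.prod volume) :=
      (hf.integrable.convolution_integrand (ContinuousLinearMap.lsmul ℝ ℝ)
        (integrable_boxKernel b)).mul_bdd (c := 1)
        (by fun_prop) (ae_of_all _ fun p => by simpa using abs_sin_le_one _)
    calc f t * (b * Real.sinc (b * t))
        = ∫ y, ν y * (Real.sin (y * t) * (b * Real.sinc (b * t))) := by
          simp_rw [hf.eq_integral t, ← integral_mul_const, mul_assoc]
      _ = ∫ y, ∫ z, ν y * boxKernel b (z - y) * Real.sin (z * t) := by
          simp_rw [← integral_boxKernel_sub_mul_sin hb, ← integral_const_mul, mul_assoc]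
      _ = ∫ z, (ν ⋆ boxKernel b) z * Real.sin (z * t) := by
          rw [← integral_integral_swap hF]
          simp_rw [convolution_lsmul, smul_eq_mul, ← integral_mul_const]

lemma exists_isSineRep_sin_mul_prod {c : ℝ} (hc : 0 ≤ c) :
    ∀ {m : ℕ} (b : Fin (m + 1) → ℝ), (∀ j, 0 ≤ b j) →
      ∃ ν, IsSineRep (fun t => Real.sin (c * t) * ∏ j, b j * Real.sinc (b j * t)) ν
  | 0, b, hb => ⟨_, by simpa using isSineRep_sin_mul_sinc (hb 0) hc⟩
  | m + 1, b, hb => by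
    obtain ⟨ν, hν⟩ := exists_isSineRep_sin_mul_prod hc (fun j => b j.castSucc) fun j => hb _
    exact ⟨_, by simpa [Fin.prod_univ_castSucc, mul_assoc] using hν.mul_sinc (hb (Fin.last _))⟩

lemma IsSineRep.integral_exp_neg_mul_mul_nonneg {f ν : ℝ → ℝ} (hf : IsSineRep f ν) {ε : ℝ}
    (hε : 0 < ε) : 0 ≤ ∫ t in Ioi 0, Real.exp (-ε * t) * f t := by
  have hF : Integrable
      (Function.uncurry fun t y => Real.exp (-ε * t) * ν y * Real.sin (y * t))
      ((volume.restrict (Ioi 0)).prod volume) :=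
    ((exp_neg_integrableOn_Ioi 0 hε).mul_prod hf.integrable).mul_bdd (c := 1)
      (by fun_prop) (ae_of_all _ fun p => by simpa using abs_sin_le_one _)
  have hk : Integrable fun y => ν y * (y / (ε ^ 2 + y ^ 2)) :=
    hf.integrable.mul_bdd (c := 1 / (2 * ε)) (by fun_prop : Measurable _).aestronglyMeasurable
      (ae_of_all _ fun y => by
        rw [norm_div, norm_of_nonneg (by positivity : 0 ≤ ε ^ 2 + y ^ 2),
          div_le_div_iff₀ (by positivity) (by positivity), norm_eq_abs]
        nlinarith [sq_nonneg (|y| - ε), sq_abs y])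
  calc (0 : ℝ)
      ≤ ∫ y, ν y * (y / (ε ^ 2 + y ^ 2)) := by
        refine integral_nonneg_of_nonneg_add_neg hk fun y hy => ?_
        have : ν y * (y / (ε ^ 2 + y ^ 2)) + ν (-y) * (-y / (ε ^ 2 + (-y) ^ 2))
            = (ν y - ν (-y)) * (y / (ε ^ 2 + y ^ 2)) := by ring
        rw [this]
        exact mul_nonneg (sub_nonneg.2 (hf.rightHeavy y hy.le)) (by positivity)
    _ = ∫ y, ∫ t in Ioi 0, Real.exp (-ε * t) * ν y * Real.sin (y * t) := by
        simp_rw [mul_comm (Real.exp _) (ν _), mul_assoc, integral_const_mul,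
          integral_exp_neg_mul_mul_sin hε]
    _ = ∫ t in Ioi 0, Real.exp (-ε * t) * f t := by
        rw [← integral_integral_swap hF]
        simp_rw [hf.eq_integral, ← integral_const_mul, mul_assoc]

/-- For `n ≥ 3` and all `aᵢ > 0`, `∫_0^∞ t ∏ᵢ aᵢ sinc(aᵢ t) dt ≥ 0`. -/
theorem I1_nonneg (n : ℕ) (hn : 3 ≤ n) (a : Fin n → ℝ) (ha : ∀ i, 0 < a i) :
    0 ≤ ∫ t in Set.Ioi (0:ℝ), t * ∏ i, a i * _root_.sinc (a i * t) := by
  obtain ⟨m, rfl⟩ : ∃ m, n = m + 2 := ⟨n - 2, by omega⟩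
  rw [sinc_eq_real_sinc]
  obtain ⟨ν, hν⟩ := exists_isSineRep_sin_mul_prod (ha 0).le (fun j => a j.succ) fun j => (ha _).le
  have hrep : IsSineRep (fun t => t * ∏ i, a i * Real.sinc (a i * t)) ν := by
    convert hν using 2 with t
    rw [Fin.prod_univ_succ, ← mul_assoc, mul_mul_sinc]
  exact ge_of_tendsto
    (tendsto_integral_exp_neg_mul_mul (integrableOn_Ioi_mul_prod_sinc a (by simpa using hn)))
    (eventually_mem_nhdsWithin.mono fun ε hε => hrep.integral_exp_neg_mul_mul_nonneg hε)
end

section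
/- Let f be piecewise C¹ with compact support. Then the function ℓ ↦ p.v.∫ f(ℓ−k)/k dk is continuous; in fact the truncated integrals F_ε converge uniformly, with |lim_{δ→0⁺}F_δ(ℓ) − F_ε(ℓ)| ≤ 2ε·sup|f'| for all ℓ. -/
open MeasureTheory Real Filter Set Topology
open scoped NNReal

/-!
Folding `k ↦ -k` onto `k > 0` turns the truncated integral `F_ε(ℓ)` into
`∫_{k > ε} (f(ℓ - k) - f(ℓ + k)) / k dk`. Since `f` is `M`-Lipschitz (by the mean value
inequality for right derivatives), this folded integrand is bounded by `2M`, and by compact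
support it vanishes for large `k`. Hence it is integrable on `k > 0`, its integral `G(ℓ)` depends
continuously on `ℓ` by dominated convergence, and `|G(ℓ) - F_ε(ℓ)|` is the integral over
`(0, ε]` of a function bounded by `2M`.
-/

theorem lipschitzWith_of_hasDerivWithinAt_Ici {E : Type*} [NormedAddCommGroup E]
    [NormedSpace ℝ E] {f : ℝ → E} {C : ℝ} (hf : Continuous f)
    (hd : ∀ x, ∃ d : E, ‖d‖ ≤ C ∧ HasDerivWithinAt f d (Ici x) x) :
    LipschitzWith C.toNNReal f := by
  choose d hdC hderiv using hd
  have hdist_of_le : ∀ x y, x ≤ y → dist (f y) (f x) ≤ C.toNNReal * dist y x := by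
    intro x y hxy
    rw [dist_eq_norm, dist_eq_norm, Real.norm_of_nonneg (sub_nonneg.2 hxy)]
    exact (norm_image_sub_le_of_norm_deriv_right_le_segment hf.continuousOn
      (fun t _ => hderiv t) (fun t _ => hdC t) y (right_mem_Icc.2 hxy)).trans
      (mul_le_mul_of_nonneg_right (Real.le_coe_toNNReal C) (sub_nonneg.2 hxy))
  refine LipschitzWith.of_dist_le_mul fun x y => ?_
  rcases le_total x y with h | h
  · rw [dist_comm, dist_comm x]
    exact hdist_of_le x y h
  · exact hdist_of_le y x h

theorem integrableOn_Ioi_div_self {h : ℝ → ℝ} (hh : Integrable h) {ε : ℝ} (hε : 0 < ε) :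
    IntegrableOn (fun k => h k / k) (Ioi ε) := by
  simp_rw [div_eq_mul_inv]
  refine hh.integrableOn.mul_bdd (c := ε⁻¹) measurable_inv.aestronglyMeasurable ?_
  filter_upwards [self_mem_ae_restrict measurableSet_Ioi] with k (hk : ε < k)
  rw [norm_inv, Real.norm_of_nonneg (hε.trans hk).le]
  exact inv_anti₀ hε hk.le

noncomputable def pvIntegrand (f : ℝ → ℝ) (ℓ k : ℝ) : ℝ := (f (ℓ - k) - f (ℓ + k)) / k

noncomputable def truncatedPV (f : ℝ → ℝ) (ε ℓ : ℝ) : ℝ :=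
  (∫ k in Iic (-ε), f (ℓ - k) / k) + ∫ k in Ici ε, f (ℓ - k) / k

section

variable {f : ℝ → ℝ} {K : ℝ≥0} {ℓ k R r : ℝ}

theorem measurable_pvIntegrand (hf : Continuous f) (ℓ : ℝ) : Measurable (pvIntegrand f ℓ) := by
  unfold pvIntegrand
  fun_prop

theorem continuous_pvIntegrand_left (hf : Continuous f) (k : ℝ) :
    Continuous fun ℓ => pvIntegrand f ℓ k := by
  unfold pvIntegrand
  fun_prop

theorem abs_pvIntegrand_le (hf : LipschitzWith K f) (hk : 0 < k) :
    |pvIntegrand f ℓ k| ≤ 2 * K := by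
  rw [pvIntegrand, abs_div, abs_of_pos hk, div_le_iff₀ hk]
  calc |f (ℓ - k) - f (ℓ + k)| = dist (f (ℓ - k)) (f (ℓ + k)) := (Real.dist_eq _ _).symm
    _ ≤ K * dist (ℓ - k) (ℓ + k) := hf.dist_le_mul _ _
    _ = 2 * K * k := by
      rw [Real.dist_eq, show ℓ - k - (ℓ + k) = -(2 * k) by ring, abs_neg,
        abs_of_pos (by positivity)]
      ring

theorem pvIntegrand_eq_zero (hR : ∀ x, R ≤ |x| → f x = 0) (hℓ : |ℓ| ≤ r) (hk : R + r ≤ k) :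
    pvIntegrand f ℓ k = 0 := by
  rw [pvIntegrand, hR (ℓ - k) (le_abs.2 (Or.inr (by linarith [le_abs_self ℓ]))),
    hR (ℓ + k) (le_abs.2 (Or.inl (by linarith [neg_abs_le ℓ]))), sub_zero, zero_div]

theorem abs_pvIntegrand_le_indicator (hf : LipschitzWith K f) (hR : ∀ x, R ≤ |x| → f x = 0)
    (hℓ : |ℓ| ≤ r) (hk : 0 < k) :
    |pvIntegrand f ℓ k| ≤ (Ioc 0 (R + r)).indicator (fun _ => 2 * (K : ℝ)) k := by
  by_cases h : k ≤ R + r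
  · rw [indicator_of_mem (show k ∈ Ioc 0 (R + r) from ⟨hk, h⟩)]
    exact abs_pvIntegrand_le hf hk
  · rw [pvIntegrand_eq_zero hR hℓ (not_le.1 h).le, abs_zero]
    exact indicator_nonneg (fun _ _ => by positivity) k

theorem integrable_indicator_Ioc_const (a b c : ℝ) :
    Integrable ((Ioc a b).indicator fun _ => c) :=
  (integrable_indicator_iff measurableSet_Ioc).2 (integrableOn_const measure_Ioc_lt_top.ne)

theorem integrableOn_pvIntegrand (hf : LipschitzWith K f) (hs : HasCompactSupport f) (ℓ : ℝ) :
    IntegrableOn (pvIntegrand f ℓ) (Ioi 0) := by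
  obtain ⟨R, -, hR⟩ := hs.exists_pos_le_norm
  refine (integrable_indicator_Ioc_const 0 (R + |ℓ|) (2 * K)).restrict.mono'
    (measurable_pvIntegrand hf.continuous ℓ).aestronglyMeasurable ?_
  filter_upwards [self_mem_ae_restrict measurableSet_Ioi] with k hk
  exact abs_pvIntegrand_le_indicator hf hR le_rfl hk

theorem continuous_integral_pvIntegrand (hf : LipschitzWith K f) (hs : HasCompactSupport f) :
    Continuous fun ℓ => ∫ k in Ioi 0, pvIntegrand f ℓ k := by
  obtain ⟨R, -, hR⟩ := hs.exists_pos_le_norm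
  refine continuous_iff_continuousAt.2 fun ℓ₀ => continuousAt_of_dominated
    (Eventually.of_forall fun ℓ => (measurable_pvIntegrand hf.continuous ℓ).aestronglyMeasurable)
    ?_ (integrable_indicator_Ioc_const 0 (R + (|ℓ₀| + 1)) (2 * K)).restrict
    (ae_of_all _ fun k => (continuous_pvIntegrand_left hf.continuous k).continuousAt)
  filter_upwards [Metric.ball_mem_nhds ℓ₀ one_pos] with ℓ hℓ
  have hℓ₀ : |ℓ| ≤ |ℓ₀| + 1 := by
    rw [Metric.mem_ball, Real.dist_eq] at hℓ
    linarith [abs_sub_abs_le_abs_sub ℓ ℓ₀]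
  filter_upwards [self_mem_ae_restrict measurableSet_Ioi] with k hk
  exact abs_pvIntegrand_le_indicator hf hR hℓ₀ hk

theorem truncatedPV_eq_integral_pvIntegrand (hf : Continuous f) (hs : HasCompactSupport f)
    {ε : ℝ} (hε : 0 < ε) (ℓ : ℝ) :
    truncatedPV f ε ℓ = ∫ k in Ioi ε, pvIntegrand f ℓ k := by
  have hint : Integrable f := hf.integrable_of_hasCompactSupport hs
  have hneg : (∫ k in Iic (-ε), f (ℓ - k) / k) = -∫ k in Ioi ε, f (ℓ + k) / k := by
    rw [← integral_neg, ← neg_neg ε, ← integral_comp_neg_Iic, neg_neg]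
    simp only [sub_eq_add_neg, div_neg, neg_neg]
  rw [truncatedPV, hneg, integral_Ici_eq_integral_Ioi, neg_add_eq_sub,
    ← integral_sub (integrableOn_Ioi_div_self (hint.comp_sub_left ℓ) hε)
      (integrableOn_Ioi_div_self (hint.comp_add_left ℓ) hε)]
  simp only [pvIntegrand, sub_div]

theorem abs_integral_pvIntegrand_sub_truncatedPV_le (hf : LipschitzWith K f)
    (hs : HasCompactSupport f) {ε : ℝ} (hε : 0 < ε) (ℓ : ℝ) :
    |(∫ k in Ioi 0, pvIntegrand f ℓ k) - truncatedPV f ε ℓ| ≤ 2 * ε * K := by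
  have hint := integrableOn_pvIntegrand hf hs ℓ
  rw [truncatedPV_eq_integral_pvIntegrand hf.continuous hs hε, ← Ioc_union_Ioi_eq_Ioi hε.le,
    setIntegral_union (Ioc_disjoint_Ioi le_rfl) measurableSet_Ioi
      (hint.mono_set Ioc_subset_Ioi_self) (hint.mono_set (Ioi_subset_Ioi hε.le)),
    add_sub_cancel_right]
  calc ‖∫ k in Ioc 0 ε, pvIntegrand f ℓ k‖
      ≤ 2 * K * volume.real (Ioc 0 ε) :=
        norm_setIntegral_le_of_norm_le_const measure_Ioc_lt_top
          fun k hk => abs_pvIntegrand_le hf hk.1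
    _ = 2 * ε * K := by
      rw [Real.volume_real_Ioc_of_le hε.le, sub_zero]
      ring

theorem tendsto_truncatedPV (hf : LipschitzWith K f) (hs : HasCompactSupport f) (ℓ : ℝ) :
    Tendsto (fun ε => truncatedPV f ε ℓ) (𝓝[>] 0) (𝓝 (∫ k in Ioi 0, pvIntegrand f ℓ k)) := by
  have hlim : Tendsto (fun ε : ℝ => 2 * ε * K) (𝓝[>] 0) (𝓝 0) :=
    ((Continuous.tendsto' (by fun_prop) 0 0 (by simp)).mono_left nhdsWithin_le_nhds)
  rw [tendsto_iff_dist_tendsto_zero]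
  refine squeeze_zero' (Eventually.of_forall fun _ => dist_nonneg) ?_ hlim
  filter_upwards [self_mem_nhdsWithin] with ε (hε : 0 < ε)
  rw [Real.dist_eq, abs_sub_comm]
  exact abs_integral_pvIntegrand_sub_truncatedPV_le hf hs hε ℓ

end

theorem pv_continuous_general (f : ℝ → ℝ) (M : ℝ)
    (hf_cont : Continuous f) (hf_supp : HasCompactSupport f)
    (hr : ∀ x, ∃ d : ℝ, |d| ≤ M ∧ HasDerivWithinAt f d (Set.Ici x) x) :
    ∃ G : ℝ → ℝ, Continuous G ∧
      (∀ ℓ : ℝ, Tendsto (fun ε : ℝ =>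
          (∫ k in Set.Iic (-ε), f (ℓ - k) / k) + ∫ k in Set.Ici ε, f (ℓ - k) / k)
        (nhdsWithin 0 (Set.Ioi 0)) (nhds (G ℓ))) ∧
      (∀ ε : ℝ, 0 < ε → ∀ ℓ : ℝ,
        |G ℓ - ((∫ k in Set.Iic (-ε), f (ℓ - k) / k) + ∫ k in Set.Ici ε, f (ℓ - k) / k)|
          ≤ 2 * ε * M) := by
  obtain ⟨d, hdM, -⟩ := hr 0
  have hM : 0 ≤ M := (abs_nonneg d).trans hdM
  have hf : LipschitzWith M.toNNReal f := lipschitzWith_of_hasDerivWithinAt_Ici hf_cont hr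
  refine ⟨fun ℓ => ∫ k in Ioi 0, pvIntegrand f ℓ k, continuous_integral_pvIntegrand hf hf_supp,
    tendsto_truncatedPV hf hf_supp, fun ε hε ℓ => ?_⟩
  simpa only [truncatedPV, Real.coe_toNNReal M hM] using
    abs_integral_pvIntegrand_sub_truncatedPV_le hf hf_supp hε ℓ

/-- If `f` is piecewise `C¹` (continuous, with one-sided derivatives everywhere
bounded by `M`) with compact support, then `ℓ ↦ p.v.∫ f(ℓ−k)/k dk` is
continuous, and the truncated integrals `F_ε` converge uniformly with
`|lim F_δ(ℓ) − F_ε(ℓ)| ≤ 2ε·M`. -/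
theorem pv_continuous (f : ℝ → ℝ) (M : ℝ)
    (hf_cont : Continuous f) (hf_supp : HasCompactSupport f)
    (hr : ∀ x, ∃ d : ℝ, |d| ≤ M ∧ HasDerivWithinAt f d (Set.Ici x) x)
    (hl : ∀ x, ∃ d : ℝ, |d| ≤ M ∧ HasDerivWithinAt f d (Set.Iic x) x) :
    ∃ G : ℝ → ℝ, Continuous G ∧
      (∀ ℓ : ℝ, Tendsto (fun ε : ℝ =>
          (∫ k in Set.Iic (-ε), f (ℓ - k) / k) + ∫ k in Set.Ici ε, f (ℓ - k) / k)
        (nhdsWithin 0 (Set.Ioi 0)) (nhds (G ℓ))) ∧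
      (∀ ε : ℝ, 0 < ε → ∀ ℓ : ℝ,
        |G ℓ - ((∫ k in Set.Iic (-ε), f (ℓ - k) / k) + ∫ k in Set.Ici ε, f (ℓ - k) / k)|
          ≤ 2 * ε * M) :=
  pv_continuous_general f M hf_cont hf_supp hr
end
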